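/- arXiv:2208.08400 — 4 statements merged into one kernel-verified Lean document; each statement's English description precedes it below -/
import Mathlib

section
/- Let b be a bounded function on [0,1] and suppose there exists a partition 0 = z₀ < z₁ < ... < z_N = 1 such that b is monotone and of one sign on each open subinterval (z_j, z_{j+1}). Let s_k be the alternating ±1 step function on dyadic intervals of length 2^{-k}. Then there is an absolute constant C with |∫₀¹ b(x) s_k(x) dx| ≤ C · N · 2^{-k} · ‖b‖_∞. -/
/-!
On an interval where `f` is monotone, cut `[a, c]` at the integers: `sAlt 0` equals `(-1) ^ n` on
the whole cell `[n, n + 1)`, so the whole cells contribute an alternating sum of cell integrals.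
These increase from cell to cell (translate by one and compare `f x ≤ f (x + 1)`), so the
alternating sum is at most twice their maximum, `2 M`; the two partial cells at the ends add at
most `M` each. Rescaling by `2 ^ k` gives `4 · 2 ^ (-k) · M` on each of the `N` pieces.
-/

open MeasureTheory Set

/-- The alternating ±1 step function on `[0,1]` with `2^k` pieces: it equals
`(-1)^(j+1)` on the interval `((j-1)/2^k, j/2^k)` for `j = 1, ..., 2^k`. -/
noncomputable def sAlt (k : ℕ) (x : ℝ) : ℝ :=
  if Even ⌊x * 2 ^ k⌋ then 1 else -1

theorem measurable_sAlt (k : ℕ) : Measurable (sAlt k) :=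
  Measurable.ite ((Int.measurable_floor.comp (measurable_id.mul_const _))
    (MeasurableSet.of_discrete (s := {n : ℤ | Even n}))) measurable_const measurable_const

theorem abs_sAlt (k : ℕ) (x : ℝ) : |sAlt k x| = 1 := by
  unfold sAlt; split_ifs <;> simp

theorem sAlt_eq_sAlt_zero (k : ℕ) (x : ℝ) : sAlt k x = sAlt 0 (x * 2 ^ k) := by
  simp [sAlt]

theorem sAlt_zero_of_mem_Ico {n : ℤ} {x : ℝ} (hx : x ∈ Ico (n : ℝ) (n + 1)) :
    sAlt 0 x = (-1) ^ n := by
  have hfloor : ⌊x⌋ = n := Int.floor_eq_iff.mpr hx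
  rcases Int.even_or_odd n with hn | hn
  · simp [sAlt, hfloor, hn, hn.neg_one_zpow]
  · simp [sAlt, hfloor, Int.not_even_iff_odd.mpr hn, hn.neg_one_zpow]

theorem integral_int_add_one_mul_sAlt_zero (f : ℝ → ℝ) (n : ℤ) :
    ∫ x in (n : ℝ)..n + 1, f x * sAlt 0 x = (-1) ^ n * ∫ x in (n : ℝ)..n + 1, f x := by
  rw [← intervalIntegral.integral_const_mul]
  refine intervalIntegral.integral_congr_Ioo_of_le (by linarith) fun x hx => ?_
  rw [sAlt_zero_of_mem_Ico (Ioo_subset_Ico_self hx), mul_comm]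

theorem alternating_sum_range_succ_bounds {A : ℕ → ℝ} {n : ℕ}
    (hA : ∀ i < n, A i ≤ A (i + 1)) :
    (Even n → A 0 ≤ ∑ i ∈ Finset.range (n + 1), (-1) ^ i * A i ∧
      ∑ i ∈ Finset.range (n + 1), (-1) ^ i * A i ≤ A n) ∧
    (Odd n → A 0 - A n ≤ ∑ i ∈ Finset.range (n + 1), (-1) ^ i * A i ∧
      ∑ i ∈ Finset.range (n + 1), (-1) ^ i * A i ≤ 0) := by
  induction n with
  | zero => simp
  | succ n ih =>
    obtain ⟨ih_even, ih_odd⟩ := ih fun i hi => hA i (by omega)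
    have hstep := hA n (by omega)
    rw [Finset.sum_range_succ]
    rcases Nat.even_or_odd n with hn | hn
    · obtain ⟨hlo, hhi⟩ := ih_even hn
      have hsign : (-1 : ℝ) ^ (n + 1) = -1 := hn.add_one.neg_one_pow
      refine ⟨fun h => absurd h (Nat.not_even_iff_odd.mpr hn.add_one), fun _ => ?_⟩
      rw [hsign]
      constructor <;> linarith
    · obtain ⟨hlo, hhi⟩ := ih_odd hn
      have hsign : (-1 : ℝ) ^ (n + 1) = 1 := hn.add_one.neg_one_pow
      refine ⟨fun _ => ?_, fun h => absurd h (Nat.not_odd_iff_even.mpr hn.add_one)⟩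
      rw [hsign]
      constructor <;> linarith

theorem abs_alternating_sum_le {A : ℕ → ℝ} {K : ℝ} {L : ℕ} (hK : 0 ≤ K)
    (hA : ∀ i, i + 1 < L → A i ≤ A (i + 1)) (hAK : ∀ i < L, |A i| ≤ K) :
    |∑ i ∈ Finset.range L, (-1) ^ i * A i| ≤ 2 * K := by
  rcases L with _ | n
  · simpa using hK
  obtain ⟨h0, h0'⟩ := abs_le.mp (hAK 0 (by omega))
  obtain ⟨hn, hn'⟩ := abs_le.mp (hAK n (by omega))
  obtain ⟨heven, hodd⟩ := alternating_sum_range_succ_bounds (n := n) fun i hi => hA i (by omega)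
  rw [abs_le]
  rcases Nat.even_or_odd n with hpar | hpar
  · obtain ⟨hlo, hhi⟩ := heven hpar
    constructor <;> linarith
  · obtain ⟨hlo, hhi⟩ := hodd hpar
    constructor <;> linarith

theorem intervalIntegrable_of_monotoneOn_or_antitoneOn {f : ℝ → ℝ} {a c M : ℝ}
    (hac : a ≤ c) (hf : MonotoneOn f (Ioo a c) ∨ AntitoneOn f (Ioo a c))
    (hM : ∀ x ∈ Ioo a c, |f x| ≤ M) :
    IntervalIntegrable f volume a c := by
  have hmeas : AEMeasurable f (volume.restrict (Ioo a c)) :=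
    hf.elim (aemeasurable_restrict_of_monotoneOn measurableSet_Ioo)
      (aemeasurable_restrict_of_antitoneOn measurableSet_Ioo)
  refine (intervalIntegrable_iff_integrableOn_Ioo_of_le hac).mpr <|
    Integrable.mono' (g := fun _ => M) (integrableOn_const measure_Ioo_lt_top.ne)
      hmeas.aestronglyMeasurable ?_
  exact (ae_restrict_iff' measurableSet_Ioo).mpr <| Filter.Eventually.of_forall fun x hx =>
    (Real.norm_eq_abs _).trans_le (hM x hx)

theorem IntervalIntegrable.mul_sAlt {f : ℝ → ℝ} {a c : ℝ}
    (hf : IntervalIntegrable f volume a c) (k : ℕ) :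
    IntervalIntegrable (fun x => f x * sAlt k x) volume a c :=
  have hbdd : ∀ᵐ x ∂volume, ‖sAlt k x‖ ≤ 1 :=
    Filter.Eventually.of_forall fun x => (abs_sAlt k x).le
  ⟨hf.1.mul_bdd (measurable_sAlt k).aestronglyMeasurable (ae_restrict_of_ae hbdd),
    hf.2.mul_bdd (measurable_sAlt k).aestronglyMeasurable (ae_restrict_of_ae hbdd)⟩

theorem abs_integral_mul_sAlt_le_of_abs_le {f : ℝ → ℝ} {u v M : ℝ} (k : ℕ) (huv : u ≤ v)
    (hM : ∀ x ∈ Icc u v, |f x| ≤ M) : |∫ x in u..v, f x * sAlt k x| ≤ M * (v - u) := by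
  have := intervalIntegral.norm_integral_le_of_norm_le_const (C := M)
    (f := fun x => f x * sAlt k x) (a := u) (b := v) fun x hx => by
      rw [uIoc_of_le huv] at hx
      rw [Real.norm_eq_abs, abs_mul, abs_sAlt, mul_one]
      exact hM x (Ioc_subset_Icc_self hx)
  rwa [abs_of_nonneg (sub_nonneg.mpr huv)] at this

theorem IntervalIntegrable.unit_cell {f : ℝ → ℝ} {m : ℤ} {L i : ℕ}
    (hf : IntervalIntegrable f volume m (m + L)) (hi : i < L) :
    IntervalIntegrable f volume (m + i) (m + i + 1) := by
  have hiL : (i : ℝ) + 1 ≤ L := by exact_mod_cast hi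
  have hi0 : (0 : ℝ) ≤ i := i.cast_nonneg
  refine hf.mono_set ?_
  rw [uIcc_of_le (by linarith), uIcc_of_le (by linarith)]
  exact Icc_subset_Icc (by linarith) (by linarith)

theorem integral_mul_sAlt_zero_eq_alternating_sum {f : ℝ → ℝ} (m : ℤ) (L : ℕ)
    (hf : IntervalIntegrable f volume m (m + L)) :
    ∫ x in (m : ℝ)..m + L, f x * sAlt 0 x =
      (-1) ^ m * ∑ i ∈ Finset.range L, (-1) ^ i * ∫ x in (m + i : ℝ)..m + i + 1, f x := by
  have hcell (i : ℕ) : ∫ x in (m + i : ℝ)..m + i + 1, f x * sAlt 0 x =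
      (-1) ^ m * ((-1) ^ i * ∫ x in (m + i : ℝ)..m + i + 1, f x) := by
    have := integral_int_add_one_mul_sAlt_zero f (m + i)
    push_cast at this
    rw [this, zpow_add₀ (by norm_num), zpow_natCast, mul_assoc]
  have hsplit := intervalIntegral.sum_integral_adjacent_intervals (a := fun i : ℕ => (m + i : ℝ))
    (f := fun x => f x * sAlt 0 x) (n := L) fun i hi => by
      push_cast
      rw [← add_assoc]
      exact (hf.unit_cell hi).mul_sAlt 0
  push_cast at hsplit
  simp only [← add_assoc, hcell, add_zero] at hsplit
  rw [← hsplit, Finset.mul_sum]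

theorem abs_integral_mul_sAlt_zero_le_of_monotoneOn_int {f : ℝ → ℝ} {M : ℝ} (m : ℤ) (L : ℕ)
    (hf : MonotoneOn f (Ioo (m : ℝ) (m + L))) (hM : ∀ x ∈ Icc (m : ℝ) (m + L), |f x| ≤ M) :
    |∫ x in (m : ℝ)..m + L, f x * sAlt 0 x| ≤ 2 * M := by
  have hL : (m : ℝ) ≤ m + L := by simp
  have hM0 : 0 ≤ M := (abs_nonneg _).trans (hM m ⟨le_rfl, hL⟩)
  have hint : IntervalIntegrable f volume m (m + L) :=
    intervalIntegrable_of_monotoneOn_or_antitoneOn hL (Or.inl hf)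
      fun x hx => hM x (Ioo_subset_Icc_self hx)
  set A : ℕ → ℝ := fun i => ∫ x in (m + i : ℝ)..m + i + 1, f x with hA
  have hmono : ∀ i, i + 1 < L → A i ≤ A (i + 1) := by
    intro i hi
    have hiL : (i : ℝ) + 2 ≤ L := by exact_mod_cast hi
    have hi0 : (0 : ℝ) ≤ i := i.cast_nonneg
    have hshift : A (i + 1) = ∫ x in (m + i : ℝ)..m + i + 1, f (x + 1) := by
      rw [intervalIntegral.integral_comp_add_right, hA]
      push_cast; ring_nf
    rw [hshift]
    refine intervalIntegral.integral_mono_on_of_le_Ioo (by linarith)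
      (hint.unit_cell (by omega)) ?_ fun x hx => ?_
    · have := (hint.unit_cell hi).comp_add_right 1
      push_cast at this
      convert this using 1 <;> ring
    · exact hf ⟨by linarith [hx.1], by linarith [hx.2]⟩ ⟨by linarith [hx.1], by linarith [hx.2]⟩
        (by linarith)
  have hAM : ∀ i < L, |A i| ≤ M := by
    intro i hi
    have hiL : (i : ℝ) + 1 ≤ L := by exact_mod_cast hi
    have hi0 : (0 : ℝ) ≤ i := i.cast_nonneg
    have := intervalIntegral.norm_integral_le_of_norm_le_const (a := (m + i : ℝ))
      (b := m + i + 1) (C := M) (f := f) fun x hx => by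
        rw [uIoc_of_le (by linarith)] at hx
        exact (Real.norm_eq_abs _).trans_le (hM x ⟨by linarith [hx.1], by linarith [hx.2]⟩)
    simpa using this
  rw [integral_mul_sAlt_zero_eq_alternating_sum m L hint, abs_mul, abs_neg_one_zpow, one_mul]
  exact abs_alternating_sum_le hM0 hmono hAM

theorem sub_lt_one_or_exists_int_cells (a c : ℝ) :
    c - a < 1 ∨ ∃ (m : ℤ) (L : ℕ), a ≤ m ∧ (m : ℝ) ≤ a + 1 ∧ (m : ℝ) + L ≤ c ∧ c ≤ m + L + 1 := by
  rcases lt_or_ge ⌊c⌋ ⌈a⌉ with hlt | hle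
  · have hlt' : (⌊c⌋ : ℝ) + 1 ≤ ⌈a⌉ := by exact_mod_cast hlt
    left
    linarith [Int.lt_floor_add_one c, Int.ceil_lt_add_one a]
  obtain ⟨L, hL⟩ : ∃ L : ℕ, ⌊c⌋ = ⌈a⌉ + L := ⟨(⌊c⌋ - ⌈a⌉).toNat, by omega⟩
  have hcast : ((⌈a⌉ + L : ℤ) : ℝ) = ⌈a⌉ + L := by push_cast; ring
  refine Or.inr ⟨⌈a⌉, L, Int.le_ceil a, (Int.ceil_lt_add_one a).le, ?_, ?_⟩
  · rw [← hcast, ← hL]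
    exact Int.floor_le c
  · rw [← hcast, ← hL]
    exact (Int.lt_floor_add_one c).le

theorem abs_integral_mul_sAlt_zero_le_of_monotoneOn {f : ℝ → ℝ} {a c M : ℝ} (hac : a ≤ c)
    (hf : MonotoneOn f (Ioo a c)) (hM : ∀ x ∈ Icc a c, |f x| ≤ M) :
    |∫ x in a..c, f x * sAlt 0 x| ≤ 4 * M := by
  have hM0 : 0 ≤ M := (abs_nonneg _).trans (hM a ⟨le_rfl, hac⟩)
  have hint : IntervalIntegrable (fun x => f x * sAlt 0 x) volume a c :=
    (intervalIntegrable_of_monotoneOn_or_antitoneOn hac (Or.inl hf)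
      fun x hx => hM x (Ioo_subset_Icc_self hx)).mul_sAlt 0
  have hsub : ∀ u v, a ≤ u → u ≤ v → v ≤ c →
      |∫ x in u..v, f x * sAlt 0 x| ≤ M * (v - u) := fun u v hau huv hvc =>
    abs_integral_mul_sAlt_le_of_abs_le 0 huv fun x hx => hM x ⟨hau.trans hx.1, hx.2.trans hvc⟩
  have hsub_int : ∀ u v, a ≤ u → u ≤ v → v ≤ c →
      IntervalIntegrable (fun x => f x * sAlt 0 x) volume u v := fun u v hau huv hvc =>
    hint.mono_set (by rw [uIcc_of_le hac, uIcc_of_le huv]; exact Icc_subset_Icc hau hvc)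
  obtain hshort | ⟨m, L, ham, hma, hmL, hcL⟩ := sub_lt_one_or_exists_int_cells a c
  · calc |∫ x in a..c, f x * sAlt 0 x| ≤ M * (c - a) := hsub a c le_rfl hac le_rfl
      _ ≤ 4 * M := by nlinarith
  have hL0 : (0 : ℝ) ≤ L := L.cast_nonneg
  rw [← intervalIntegral.integral_add_adjacent_intervals (hsub_int a m le_rfl ham (by linarith))
    (hsub_int m c ham (by linarith) le_rfl),
    ← intervalIntegral.integral_add_adjacent_intervals (hsub_int m (m + L) ham (by linarith) hmL)
    (hsub_int (m + L) c (by linarith) hmL le_rfl)]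
  have hleft := hsub a m le_rfl ham (by linarith)
  have hmid := abs_integral_mul_sAlt_zero_le_of_monotoneOn_int m L
    (hf.mono (Ioo_subset_Ioo ham hmL)) fun x hx => hM x ⟨ham.trans hx.1, hx.2.trans hmL⟩
  have hright := hsub (m + L) c (by linarith) hmL le_rfl
  calc _ ≤ |∫ x in a..m, f x * sAlt 0 x| + (|∫ x in (m : ℝ)..m + L, f x * sAlt 0 x|
        + |∫ x in (m + L : ℝ)..c, f x * sAlt 0 x|) :=
        (abs_add_le _ _).trans (by gcongr; exact abs_add_le _ _)
    _ ≤ M * (m - a) + (2 * M + M * (c - (m + L))) := by gcongr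
    _ ≤ 4 * M := by nlinarith

theorem abs_integral_mul_sAlt_zero_le {f : ℝ → ℝ} {a c M : ℝ} (hac : a ≤ c)
    (hf : MonotoneOn f (Ioo a c) ∨ AntitoneOn f (Ioo a c)) (hM : ∀ x ∈ Icc a c, |f x| ≤ M) :
    |∫ x in a..c, f x * sAlt 0 x| ≤ 4 * M := by
  rcases hf with hf | hf
  · exact abs_integral_mul_sAlt_zero_le_of_monotoneOn hac hf hM
  · have := abs_integral_mul_sAlt_zero_le_of_monotoneOn hac hf.neg fun x hx =>
      (abs_neg (f x)).trans_le (hM x hx)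
    simpa only [neg_mul, intervalIntegral.integral_neg, abs_neg] using this

theorem abs_integral_mul_sAlt_le {b : ℝ → ℝ} {a c M : ℝ} (k : ℕ) (hac : a ≤ c)
    (hb : MonotoneOn b (Ioo a c) ∨ AntitoneOn b (Ioo a c)) (hM : ∀ x ∈ Icc a c, |b x| ≤ M) :
    |∫ x in a..c, b x * sAlt k x| ≤ 4 * 2 ^ (-(k : ℤ)) * M := by
  set q : ℝ := 2 ^ k
  have hq : 0 < q := by positivity
  have hscale :
      ∫ x in a..c, b x * sAlt k x = q⁻¹ * ∫ t in a * q..c * q, b (t / q) * sAlt 0 t := by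
    rw [← smul_eq_mul, ← intervalIntegral.integral_comp_mul_right _ hq.ne']
    simp [sAlt_eq_sAlt_zero k, hq.ne', q]
  have hdiv_mono : MonotoneOn (· / q) (Ioo (a * q) (c * q)) := fun x _ y _ hxy =>
    div_le_div_of_nonneg_right hxy hq.le
  have hdiv_maps : MapsTo (· / q) (Ioo (a * q) (c * q)) (Ioo a c) := fun x hx =>
    ⟨(lt_div_iff₀ hq).mpr hx.1, (div_lt_iff₀ hq).mpr hx.2⟩
  have hunit := abs_integral_mul_sAlt_zero_le (f := fun t => b (t / q))
    (mul_le_mul_of_nonneg_right hac hq.le)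
    (hb.imp (fun h => h.comp hdiv_mono hdiv_maps) fun h =>
      h.comp_MonotoneOn hdiv_mono hdiv_maps)
    fun t ht => hM _ ⟨(le_div_iff₀ hq).mpr ht.1, (div_le_iff₀ hq).mpr ht.2⟩
  rw [hscale, abs_mul, abs_of_pos (inv_pos.mpr hq), zpow_neg, zpow_natCast]
  calc q⁻¹ * _ ≤ q⁻¹ * (4 * M) := by gcongr
    _ = 4 * q⁻¹ * M := by ring

/-- There is an absolute constant `C` such that: if `b` is bounded by `M` on `[0,1]` and there is
a partition `0 = z₀ < z₁ < ... < z_N = 1` such that `b` is monotone and of one sign on each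
open subinterval `(z_j, z_{j+1})`, then `|∫₀¹ b(x) s_k(x) dx| ≤ C · N · 2^{-k} · M`. -/
theorem stmt1 :
    ∃ C : ℝ, 0 < C ∧
      ∀ (b : ℝ → ℝ) (M : ℝ) (N k : ℕ) (z : ℕ → ℝ),
        0 < N →
        z 0 = 0 → z N = 1 → (∀ j < N, z j < z (j + 1)) →
        (∀ j < N,
          (MonotoneOn b (Ioo (z j) (z (j+1))) ∨ AntitoneOn b (Ioo (z j) (z (j+1)))) ∧
          ((∀ x ∈ Ioo (z j) (z (j+1)), 0 ≤ b x) ∨ (∀ x ∈ Ioo (z j) (z (j+1)), b x ≤ 0))) →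
        (∀ x ∈ Icc (0:ℝ) 1, |b x| ≤ M) →
        |∫ x in (0:ℝ)..1, b x * sAlt k x| ≤ C * N * (2:ℝ) ^ (-(k:ℤ)) * M := by
  refine ⟨4, by norm_num, fun b M N k z _ hz0 hzN hz hpieces hM => ?_⟩
  have hzmono : StrictMonoOn z (Iic N) := strictMonoOn_Iic_of_lt_succ hz
  have hsub : ∀ j < N, Icc (z j) (z (j + 1)) ⊆ Icc 0 1 := fun j hj => by
    rw [← hz0, ← hzN]
    exact Icc_subset_Icc (hzmono.monotoneOn (mem_Iic.mpr N.zero_le) (mem_Iic.mpr hj.le) j.zero_le)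
      (hzmono.monotoneOn (mem_Iic.mpr hj) (mem_Iic.mpr le_rfl) hj)
  have hint : ∀ j < N, IntervalIntegrable (fun x => b x * sAlt k x) volume (z j) (z (j + 1)) :=
    fun j hj => (intervalIntegrable_of_monotoneOn_or_antitoneOn (hz j hj).le (hpieces j hj).1
      fun x hx => hM x (hsub j hj (Ioo_subset_Icc_self hx))).mul_sAlt k
  have hpiece : ∀ j < N, |∫ x in z j..z (j + 1), b x * sAlt k x| ≤ 4 * 2 ^ (-(k : ℤ)) * M :=
    fun j hj => abs_integral_mul_sAlt_le k (hz j hj).le (hpieces j hj).1 fun x hx =>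
      hM x (hsub j hj hx)
  rw [← hz0, ← hzN, ← intervalIntegral.sum_integral_adjacent_intervals hint]
  calc _ ≤ ∑ j ∈ Finset.range N, |∫ x in z j..z (j + 1), b x * sAlt k x| :=
        Finset.abs_sum_le_sum_abs _ _
    _ ≤ ∑ _j ∈ Finset.range N, 4 * 2 ^ (-(k : ℤ)) * M :=
        Finset.sum_le_sum fun j hj => hpiece j (Finset.mem_range.mp hj)
    _ = 4 * N * 2 ^ (-(k : ℤ)) * M := by
        rw [Finset.sum_const, Finset.card_range, nsmul_eq_mul]; ring
end

section
/- Let ε > 0 and let X₁, X₂, ... be i.i.d. random variables with P(X_n = 1−ε) = P(X_n = 1+ε) = 1/2. Set Y₀ = 1 and Y_n = X₁ ⋯ X_n. Given a ∈ (0,1), define the hitting time T_a = inf{ n : Y_n ≥ 1/((1+ε)a) }. Then P(T_a < ∞) ≥ a. -/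
/-!
For `ε < 1` the products `Yₙ = X₀ ⋯ Xₙ₋₁` form a nonnegative martingale of mean one. Stopped at
the first time it reaches `c = 1 / ((1 + ε) a)` it stays at most `c (1 + ε) = 1 / a` and keeps mean
one, so `1 ≤ P(T < ∞) / a + E[Yₙ; T > n]`. On `{T > n}` we have `Yₙ < c`, hence
`Yₙ ≤ √c · √Yₙ`, and `E[√Yₙ] = rⁿ` with `r = (√(1 - ε) + √(1 + ε)) / 2 < 1` by strict concavity
of the square root; letting `n → ∞` gives `a ≤ P(T < ∞)`.

For `ε ≥ 1` the factors may be nonpositive, but then `1 + ε ≥ 2`: if `2ᵐ ≤ 1 / a < 2ᵐ⁺¹`, the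
event that the first `m` factors all equal `1 + ε` already reaches the level and has probability
`2⁻ᵐ ≥ a`.
-/

open MeasureTheory ProbabilityTheory Set Finset

namespace ProbabilityTheory

variable {Ω β γ : Type*} {mΩ : MeasurableSpace Ω} {μ : Measure Ω}
  [mβ : MeasurableSpace β] [MeasurableSpace γ]

lemma iIndepFun.indepFun_of_measurable_iSup_lt {X : ℕ → Ω → β} (hX : iIndepFun X μ)
    (hmeas : ∀ i, Measurable (X i)) {n : ℕ} {F : Ω → γ}
    (hF : Measurable[⨆ i < n, mβ.comap (X i)] F) : IndepFun F (X n) μ := by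
  rw [IndepFun_iff_Indep]
  have h := indep_iSup_of_disjoint (fun i => (hmeas i).comap_le) hX.iIndep
    (S := Set.Iio n) (T := {n}) (by simp)
  simp only [mem_singleton_iff, iSup_iSup_eq_left] at h
  exact indep_of_indep_of_le_left h hF.comap_le

lemma iIndepFun.integral_prod_range_eq_pow {𝕜 : Type*} [RCLike 𝕜] {X : ℕ → Ω → 𝕜}
    (hX : iIndepFun X μ) (hmeas : ∀ i, Measurable (X i)) {m : 𝕜} (hm : ∀ i, ∫ ω, X i ω ∂μ = m)
    (n : ℕ) :
    ∫ ω, ∏ i ∈ range n, X i ω ∂μ = m ^ n := by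
  have := hX.isProbabilityMeasure
  induction n with
  | zero => simp
  | succ n ih =>
    have h := (hX.indepFun_prod_range_succ hmeas n).integral_mul_eq_mul_integral
      (by fun_prop) (hmeas n).aestronglyMeasurable
    simp only [Finset.prod_apply, Pi.mul_apply] at h
    simp only [Finset.prod_range_succ, h, ih, hm, pow_succ]

end ProbabilityTheory

section TwoPoint

variable {Ω : Type*} {mΩ : MeasurableSpace Ω} {μ : Measure Ω} [IsProbabilityMeasure μ]
  {Z : Ω → ℝ} {b c : ℝ}

lemma ae_eq_or_eq_of_measure_eq_half (hZ : Measurable Z) (hbc : b ≠ c)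
    (hb : μ {ω | Z ω = b} = 1 / 2) (hc : μ {ω | Z ω = c} = 1 / 2) :
    ∀ᵐ ω ∂μ, Z ω = b ∨ Z ω = c := by
  have hdisj : Disjoint {ω | Z ω = b} {ω | Z ω = c} :=
    Set.disjoint_left.2 fun ω (h1 : Z ω = b) (h2 : Z ω = c) => hbc (h1.symm.trans h2)
  have hunion : μ ({ω | Z ω = b} ∪ {ω | Z ω = c}) = 1 := by
    rw [measure_union hdisj (hZ (measurableSet_singleton c)), hb, hc, ENNReal.add_halves]
  exact (prob_compl_eq_zero_iff ((hZ (measurableSet_singleton b)).union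
    (hZ (measurableSet_singleton c)))).2 hunion

lemma integral_comp_eq_of_measure_eq_half (hZ : Measurable Z) (hbc : b ≠ c)
    (hb : μ {ω | Z ω = b} = 1 / 2) (hc : μ {ω | Z ω = c} = 1 / 2) (f : ℝ → ℝ) :
    ∫ ω, f (Z ω) ∂μ = (f b + f c) / 2 := by
  have hSb : MeasurableSet {ω | Z ω = b} := hZ (measurableSet_singleton b)
  have hSc : MeasurableSet {ω | Z ω = c} := hZ (measurableSet_singleton c)
  have heq : (fun ω => f (Z ω)) =ᵐ[μ]
      {ω | Z ω = b}.indicator (fun _ => f b) + {ω | Z ω = c}.indicator (fun _ => f c) := by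
    filter_upwards [ae_eq_or_eq_of_measure_eq_half hZ hbc hb hc] with ω hω
    rcases hω with h | h
    · simp [h, hbc]
    · simp [h, hbc.symm]
  rw [integral_congr_ae heq, integral_add' ((integrable_const _).indicator hSb)
    ((integrable_const _).indicator hSc), integral_indicator_const _ hSb,
    integral_indicator_const _ hSc, measureReal_def, measureReal_def, hb, hc]
  norm_num
  ring

end TwoPoint

/-- `stoppedProd c X n = Y_{n ∧ T}`, where `Yₙ = ∏ i < n, X i` and `T` is the first time `Y`
reaches the level `c`. -/
noncomputable def stoppedProd {Ω : Type*} (c : ℝ) (X : ℕ → Ω → ℝ) : ℕ → Ω → ℝ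
  | 0 => 1
  | n + 1 => fun ω =>
    if stoppedProd c X n ω < c then stoppedProd c X n ω * X n ω else stoppedProd c X n ω

namespace stoppedProd

variable {Ω : Type*} {c : ℝ} {X : ℕ → Ω → ℝ} {n : ℕ} {ω : Ω}

@[simp]
lemma zero_apply : stoppedProd c X 0 ω = 1 := rfl

lemma succ_of_lt (h : stoppedProd c X n ω < c) :
    stoppedProd c X (n + 1) ω = stoppedProd c X n ω * X n ω := if_pos h

lemma succ_of_le (h : c ≤ stoppedProd c X n ω) :
    stoppedProd c X (n + 1) ω = stoppedProd c X n ω := if_neg h.not_gt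

lemma eq_prod_of_lt (h : stoppedProd c X n ω < c) :
    stoppedProd c X n ω = ∏ i ∈ range n, X i ω := by
  induction n with
  | zero => simp
  | succ n ih =>
    rcases lt_or_ge (stoppedProd c X n ω) c with hn | hn
    · rw [succ_of_lt hn, ih hn, prod_range_succ]
    · rw [succ_of_le hn] at h
      exact absurd hn h.not_ge

lemma exists_le_prod_of_le (h : c ≤ stoppedProd c X n ω) :
    ∃ k, c ≤ ∏ i ∈ range k, X i ω := by
  induction n with
  | zero => exact ⟨0, by simpa using h⟩
  | succ n ih =>
    rcases lt_or_ge (stoppedProd c X n ω) c with hn | hn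
    · rw [succ_of_lt hn, eq_prod_of_lt hn, ← prod_range_succ] at h
      exact ⟨n + 1, h⟩
    · exact ih hn

lemma mem_Icc {M : ℝ} (hX : ∀ i, X i ω ∈ Icc 0 M) (hcM : 1 ≤ c * M) :
    stoppedProd c X n ω ∈ Icc 0 (c * M) := by
  induction n with
  | zero => simpa using hcM
  | succ n ih =>
    obtain ⟨h0, hle⟩ := ih
    obtain ⟨hX0, hXM⟩ := hX n
    rcases lt_or_ge (stoppedProd c X n ω) c with hn | hn
    · rw [succ_of_lt hn]
      exact ⟨mul_nonneg h0 hX0, by nlinarith⟩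
    · rw [succ_of_le hn]
      exact ⟨h0, hle⟩

lemma measurable_iSup_lt (n : ℕ) :
    Measurable[⨆ i < n, Real.measurableSpace.comap (X i)] (stoppedProd c X n) := by
  induction n with
  | zero => exact measurable_const
  | succ n ih =>
    let m := ⨆ i < n + 1, Real.measurableSpace.comap (X i)
    have hZ : Measurable[m] (stoppedProd c X n) :=
      ih.mono (biSup_mono fun i hi => hi.trans (Nat.lt_add_one n)) le_rfl
    have hX : Measurable[m] (X n) :=
      (comap_measurable (X n)).mono (le_iSup₂ (f := fun i (_ : i < n + 1) =>
        Real.measurableSpace.comap (X i)) n (Nat.lt_add_one n)) le_rfl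
    exact Measurable.ite (hZ measurableSet_Iio) (hZ.mul hX) hZ

lemma le_indicator_add_sqrt_mul_prod_sqrt {M : ℝ} (hX : ∀ i, X i ω ∈ Icc 0 M)
    (hcM : 1 ≤ c * M) :
    stoppedProd c X n ω ≤ c * M * {ω | ∃ k, c ≤ ∏ i ∈ range k, X i ω}.indicator 1 ω
      + √c * ∏ i ∈ range n, √(X i ω) := by
  obtain ⟨hZ0, hZM⟩ := mem_Icc (n := n) hX hcM
  have hind0 : 0 ≤ c * M * {ω | ∃ k, c ≤ ∏ i ∈ range k, X i ω}.indicator 1 ω :=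
    mul_nonneg (by linarith) (indicator_nonneg (fun _ _ => zero_le_one) _)
  rcases lt_or_ge (stoppedProd c X n ω) c with h | h
  · rw [← Real.sqrt_prod _ fun i _ => (hX i).1, ← eq_prod_of_lt h]
    have hsqrt : √(stoppedProd c X n ω) ≤ √c := Real.sqrt_le_sqrt h.le
    calc stoppedProd c X n ω = √(stoppedProd c X n ω) * √(stoppedProd c X n ω) :=
          (Real.mul_self_sqrt hZ0).symm
      _ ≤ √c * √(stoppedProd c X n ω) := by gcongr
      _ ≤ _ := le_add_of_nonneg_left hind0
  · have hE : ω ∈ {ω | ∃ k, c ≤ ∏ i ∈ range k, X i ω} := exists_le_prod_of_le h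
    rw [indicator_of_mem hE, Pi.one_apply, mul_one]
    exact le_add_of_le_of_nonneg hZM (mul_nonneg (Real.sqrt_nonneg c)
      (prod_nonneg fun i _ => Real.sqrt_nonneg _))

variable {mΩ : MeasurableSpace Ω} {μ : Measure Ω} {M : ℝ}

lemma integrable [IsFiniteMeasure μ] (hmeas : ∀ i, Measurable (X i))
    (hbdd : ∀ᵐ ω ∂μ, ∀ i, X i ω ∈ Icc 0 M) (hcM : 1 ≤ c * M) (n : ℕ) :
    Integrable (stoppedProd c X n) μ := by
  refine Integrable.of_bound ((measurable_iSup_lt n).mono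
    (iSup₂_le fun i _ => (hmeas i).comap_le) le_rfl).aestronglyMeasurable (c * M) ?_
  filter_upwards [hbdd] with ω hω
  obtain ⟨h0, hle⟩ := mem_Icc (n := n) hω hcM
  rwa [Real.norm_of_nonneg h0]

lemma integral_eq_one (hX : iIndepFun X μ) (hmeas : ∀ i, Measurable (X i))
    (hbdd : ∀ᵐ ω ∂μ, ∀ i, X i ω ∈ Icc 0 M) (hcM : 1 ≤ c * M)
    (hmean : ∀ i, ∫ ω, X i ω ∂μ = 1) (n : ℕ) :
    ∫ ω, stoppedProd c X n ω ∂μ = 1 := by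
  have := hX.isProbabilityMeasure
  have hint := integrable hmeas hbdd hcM (c := c)
  induction n with
  | zero => simp
  | succ n ih =>
    set Z := stoppedProd c X n
    have hZc : MeasurableSet {ω | Z ω < c} :=
      (measurable_iSup_lt n).mono (iSup₂_le fun i _ => (hmeas i).comap_le) le_rfl
        measurableSet_Iio
    set F := {ω | Z ω < c}.indicator Z
    have hsplit : stoppedProd c X (n + 1) = F * X n + (Z - F) := by
      ext ω
      rcases lt_or_ge (Z ω) c with h | h
      · simp [F, Z, succ_of_lt h, indicator_of_mem (show ω ∈ {ω | Z ω < c} from h)]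
      · simp [F, Z, succ_of_le h, indicator_of_notMem (show ω ∉ {ω | Z ω < c} from h.not_gt)]
    have hFint : Integrable F μ := (hint n).indicator hZc
    have hFX : Integrable (F * X n) μ :=
      eq_sub_of_add_eq hsplit.symm ▸ (hint (n + 1)).sub ((hint n).sub hFint)
    have hindep : IndepFun F (X n) μ :=
      hX.indepFun_of_measurable_iSup_lt hmeas
        ((measurable_iSup_lt n).indicator (measurable_iSup_lt n measurableSet_Iio))
    calc ∫ ω, stoppedProd c X (n + 1) ω ∂μ = ∫ ω, (F * X n) ω ∂μ + ∫ ω, (Z - F) ω ∂μ := by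
          rw [hsplit, integral_add' hFX ((hint n).sub hFint)]
      _ = (∫ ω, F ω ∂μ) * (∫ ω, X n ω ∂μ) + ((∫ ω, Z ω ∂μ) - ∫ ω, F ω ∂μ) := by
          rw [hindep.integral_mul_eq_mul_integral hFint.aestronglyMeasurable
            (hmeas n).aestronglyMeasurable, integral_sub' (hint n) hFint]
      _ = 1 := by rw [hmean, ih]; ring

end stoppedProd

section Hitting

variable {Ω : Type*} {mΩ : MeasurableSpace Ω} {μ : Measure Ω}

theorem one_le_mul_measureReal_exists_le_prod {X : ℕ → Ω → ℝ} (hX : iIndepFun X μ)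
    (hmeas : ∀ i, Measurable (X i)) {c M r : ℝ} (hbdd : ∀ᵐ ω ∂μ, ∀ i, X i ω ∈ Icc 0 M)
    (hcM : 1 ≤ c * M) (hmean : ∀ i, ∫ ω, X i ω ∂μ = 1) (hsqrt : ∀ i, ∫ ω, √(X i ω) ∂μ = r)
    (hr : r < 1) :
    1 ≤ c * M * μ.real {ω | ∃ n, c ≤ ∏ i ∈ range n, X i ω} := by
  have := hX.isProbabilityMeasure
  set E := {ω | ∃ n, c ≤ ∏ i ∈ range n, X i ω}
  have hE : MeasurableSet E := by
    simp only [E, Set.ofPred_exists]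
    exact MeasurableSet.iUnion fun n =>
      measurableSet_le measurable_const (Finset.measurable_prod _ fun i _ => hmeas i)
  have hEint : Integrable (E.indicator 1) μ := (integrable_const (1 : ℝ)).indicator hE
  have hr0 : 0 ≤ r := hsqrt 0 ▸ integral_nonneg fun _ => Real.sqrt_nonneg _
  have hS : ∀ n, ∫ ω, ∏ i ∈ range n, √(X i ω) ∂μ = r ^ n :=
    (hX.comp (fun _ => Real.sqrt) fun _ => Real.continuous_sqrt.measurable)
      |>.integral_prod_range_eq_pow (fun i => (hmeas i).sqrt) hsqrt
  have hSint (n : ℕ) : Integrable (fun ω => ∏ i ∈ range n, √(X i ω)) μ := by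
    refine Integrable.of_bound
      (Finset.measurable_prod _ fun i _ => (hmeas i).sqrt).aestronglyMeasurable (√M ^ n) ?_
    filter_upwards [hbdd] with ω hω
    rw [Real.norm_of_nonneg (prod_nonneg fun _ _ => Real.sqrt_nonneg _)]
    calc ∏ i ∈ range n, √(X i ω) ≤ ∏ _i ∈ range n, √M :=
          prod_le_prod (fun _ _ => Real.sqrt_nonneg _) fun i _ => Real.sqrt_le_sqrt (hω i).2
      _ = √M ^ n := by simp
  have hbound (n : ℕ) : 1 ≤ c * M * μ.real E + √c * r ^ n :=
    calc 1 = ∫ ω, stoppedProd c X n ω ∂μ :=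
          (stoppedProd.integral_eq_one hX hmeas hbdd hcM hmean n).symm
      _ ≤ ∫ ω, c * M * E.indicator 1 ω + √c * ∏ i ∈ range n, √(X i ω) ∂μ :=
          integral_mono_ae (stoppedProd.integrable hmeas hbdd hcM n)
            ((hEint.const_mul _).add ((hSint n).const_mul _))
            (hbdd.mono fun ω hω => stoppedProd.le_indicator_add_sqrt_mul_prod_sqrt hω hcM)
      _ = c * M * μ.real E + √c * r ^ n := by
          rw [integral_add (hEint.const_mul _) ((hSint n).const_mul _), integral_const_mul,
            integral_const_mul, integral_indicator_one hE, hS]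
  have hlim : Filter.Tendsto (fun n : ℕ => c * M * μ.real E + √c * r ^ n) Filter.atTop
      (nhds (c * M * μ.real E)) := by
    simpa using tendsto_const_nhds.add
      ((tendsto_pow_atTop_nhds_zero_of_lt_one hr0 hr).const_mul √c)
  exact ge_of_tendsto' hlim hbound

end Hitting

lemma sqrt_one_sub_add_sqrt_one_add_lt_two {ε : ℝ} (hε : ε ≠ 0) (hε1 : |ε| ≤ 1) :
    √(1 - ε) + √(1 + ε) < 2 := by
  obtain ⟨h₁, h₂⟩ := abs_le.1 hε1
  have h := Real.strictConcaveOn_sqrt.2 (x := 1 - ε) (y := 1 + ε)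
    (by simp only [Set.mem_Ici]; linarith) (by simp only [Set.mem_Ici]; linarith)
    (fun h => hε (by linarith)) (show (0 : ℝ) < 1 / 2 by norm_num)
    (show (0 : ℝ) < 1 / 2 by norm_num) (by norm_num)
  simp only [smul_eq_mul] at h
  rw [show (1 : ℝ) / 2 * (1 - ε) + 1 / 2 * (1 + ε) = 1 by ring, Real.sqrt_one] at h
  linarith

section CoinProduct

variable {Ω : Type*} {mΩ : MeasurableSpace Ω} {μ : Measure Ω} {ε a : ℝ} {X : ℕ → Ω → ℝ}

lemma ofReal_le_measure_exists_le_prod_of_lt_one (hε : 0 < ε) (hε1 : ε < 1)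
    (ha : a ∈ Ioo (0 : ℝ) 1) (hmeas : ∀ n, Measurable (X n)) (hindep : iIndepFun X μ)
    (hdist : ∀ n, μ {ω | X n ω = 1 - ε} = 1 / 2 ∧ μ {ω | X n ω = 1 + ε} = 1 / 2) :
    ENNReal.ofReal a ≤ μ {ω | ∃ n : ℕ, 1 / ((1 + ε) * a) ≤ ∏ i ∈ range n, X i ω} := by
  have := hindep.isProbabilityMeasure
  obtain ⟨ha0, ha1⟩ := ha
  have hne : 1 - ε ≠ 1 + ε := by linarith
  have hcM : 1 / ((1 + ε) * a) * (1 + ε) = 1 / a := by field_simp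
  have hbdd : ∀ᵐ ω ∂μ, ∀ i, X i ω ∈ Icc 0 (1 + ε) := ae_all_iff.2 fun i =>
    (ae_eq_or_eq_of_measure_eq_half (hmeas i) hne (hdist i).1 (hdist i).2).mono fun ω h => by
      rcases h with h | h <;> rw [h] <;> constructor <;> linarith
  have h := one_le_mul_measureReal_exists_le_prod hindep hmeas hbdd
    (hcM ▸ one_le_one_div ha0 ha1.le)
    (fun i => by
      rw [integral_comp_eq_of_measure_eq_half (hmeas i) hne (hdist i).1 (hdist i).2
        (fun x => x)]
      ring)
    (fun i => integral_comp_eq_of_measure_eq_half (hmeas i) hne (hdist i).1 (hdist i).2 _)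
    (by linarith [sqrt_one_sub_add_sqrt_one_add_lt_two hε.ne' (abs_le.2 ⟨by linarith, hε1.le⟩)])
  rw [hcM, one_div, ← div_eq_inv_mul, one_le_div ha0] at h
  exact ENNReal.ofReal_le_of_le_toReal h

lemma ofReal_le_measure_exists_le_prod_of_one_le (hε1 : 1 ≤ ε)
    (ha : a ∈ Ioo (0 : ℝ) 1) (hindep : iIndepFun X μ)
    (hup : ∀ n, μ {ω | X n ω = 1 + ε} = 1 / 2) :
    ENNReal.ofReal a ≤ μ {ω | ∃ n : ℕ, 1 / ((1 + ε) * a) ≤ ∏ i ∈ range n, X i ω} := by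
  obtain ⟨ha0, ha1⟩ := ha
  obtain ⟨m, hm, hm'⟩ := exists_nat_pow_near (one_le_one_div ha0 ha1.le) one_lt_two
  have hpow : 1 / ((1 + ε) * a) ≤ (1 + ε) ^ m := by
    rw [div_le_iff₀ (by positivity), ← mul_assoc, ← pow_succ, ← div_le_iff₀ ha0]
    exact hm'.le.trans (pow_le_pow_left₀ zero_le_two (by linarith) _)
  have hsub : (⋂ i ∈ range m, X i ⁻¹' {1 + ε})
      ⊆ {ω | ∃ n : ℕ, 1 / ((1 + ε) * a) ≤ ∏ i ∈ range n, X i ω} := fun ω hω => by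
    simp only [mem_iInter, Set.mem_preimage, mem_singleton_iff] at hω
    exact ⟨m, by rwa [prod_congr rfl hω, prod_const, card_range]⟩
  calc ENNReal.ofReal a ≤ ENNReal.ofReal ((1 / 2) ^ m) := by
        refine ENNReal.ofReal_le_ofReal ?_
        rwa [div_pow, one_pow, le_div_iff₀ (by positivity), mul_comm, ← le_div_iff₀ ha0]
    _ = ∏ _i ∈ range m, 1 / 2 := by simp [ENNReal.ofReal_pow, ENNReal.inv_pow]
    _ = μ (⋂ i ∈ range m, X i ⁻¹' {1 + ε}) := by
        rw [hindep.meas_biInter fun i _ => ⟨{1 + ε}, measurableSet_singleton _, rfl⟩]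
        exact prod_congr rfl fun i _ => (hup i).symm
    _ ≤ _ := measure_mono hsub

end CoinProduct

theorem stmt10_general {Ω : Type*} [MeasurableSpace Ω] (μ : Measure Ω)
    (ε a : ℝ) (hε : 0 < ε) (ha : a ∈ Ioo (0:ℝ) 1)
    (X : ℕ → Ω → ℝ)
    (hmeas : ∀ n, Measurable (X n))
    (hindep : iIndepFun X μ)
    (hdist : ∀ n, μ {ω | X n ω = 1 - ε} = 1/2 ∧ μ {ω | X n ω = 1 + ε} = 1/2) :
    ENNReal.ofReal a ≤
      μ {ω | ∃ n : ℕ, 1 / ((1 + ε) * a) ≤ ∏ i ∈ Finset.range n, X i ω} := by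
  rcases lt_or_ge ε 1 with hε1 | hε1
  · exact ofReal_le_measure_exists_le_prod_of_lt_one hε hε1 ha hmeas hindep hdist
  · exact ofReal_le_measure_exists_le_prod_of_one_le hε1 ha hindep fun n => (hdist n).2

/-- Let `ε > 0` and let `X₁, X₂, ...` be i.i.d. random variables with
`P(Xₙ = 1−ε) = P(Xₙ = 1+ε) = 1/2`.  Set `Yₙ = X₁ ⋯ Xₙ` (`Y₀ = 1`).  Given `a ∈ (0,1)`, the
probability that the hitting time `T_a = inf{n : Yₙ ≥ 1/((1+ε)a)}` is finite is at least `a`. -/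
theorem stmt10 {Ω : Type*} [MeasurableSpace Ω] (μ : Measure Ω) [IsProbabilityMeasure μ]
    (ε a : ℝ) (hε : 0 < ε) (ha : a ∈ Ioo (0:ℝ) 1)
    (X : ℕ → Ω → ℝ)
    (hmeas : ∀ n, Measurable (X n))
    (hindep : iIndepFun X μ)
    (hdist : ∀ n, μ {ω | X n ω = 1 - ε} = 1/2 ∧ μ {ω | X n ω = 1 + ε} = 1/2) :
    ENNReal.ofReal a ≤
      μ {ω | ∃ n : ℕ, 1 / ((1 + ε) * a) ≤ ∏ i ∈ Finset.range n, X i ω} :=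
  stmt10_general μ ε a hε ha X hmeas hindep hdist
end

section
/- Let σ and ω be locally finite positive Borel measures on ℝⁿ and let Φ : ℝⁿ → ℝⁿ be biLipschitz. Then the two-weight A₂ characteristic satisfies A₂(Φ_*σ, Φ_*ω) ≤ C ‖Φ‖_biLip^{4n} A₂(σ, ω), where C depends only on n, Φ_*μ denotes pushforward, and A₂(σ,ω) = sup over cubes Q of (σ(Q)/|Q|)(ω(Q)/|Q|). -/
open MeasureTheory Set ENNReal NNReal

/-- The axis-parallel cube in `ℝⁿ` with lower corner `c` and side length `r`. -/
def euCube {n : ℕ} (c : EuclideanSpace ℝ (Fin n)) (r : ℝ) : Set (EuclideanSpace ℝ (Fin n)) :=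
  {x | ∀ i, c i ≤ x i ∧ x i ≤ c i + r}

/-- The two-weight `A₂` characteristic of a pair of measures on `ℝⁿ`:
`A₂(σ,ω) = sup_Q (σ(Q)/|Q|)(ω(Q)/|Q|)` over all axis-parallel cubes `Q`. -/
noncomputable def A2char {n : ℕ} (σ ω : Measure (EuclideanSpace ℝ (Fin n))) : ℝ≥0∞ :=
  ⨆ (c : EuclideanSpace ℝ (Fin n)) (r : ℝ) (_ : 0 < r),
    (σ (euCube c r) / volume (euCube c r)) * (ω (euCube c r) / volume (euCube c r))

/-
A biLipschitz map distorts cubes by a bounded factor: `Φ⁻¹(Q) ⊆ Ψ(Q)` lies in a ball of radius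
`K √n ℓ(Q)` around `Ψ(c)`, hence in a cube `P` with `ℓ(P) = ρ ℓ(Q)`, `ρ ≍ K √n`. So
`Φ_*σ(Q) / |Q| ≤ ρⁿ σ(P) / |P|`, and likewise for `ω`; the product of the two averages over `Q`
is at most `ρ²ⁿ A₂(σ, ω) ≲ K²ⁿ A₂(σ, ω) ≤ K⁴ⁿ A₂(σ, ω)`.
-/

section Cubes

variable {n : ℕ}

lemma euCube_eq_preimage_pi (c : EuclideanSpace ℝ (Fin n)) (r : ℝ) :
    euCube c r = (MeasurableEquiv.toLp 2 (Fin n → ℝ)).symm ⁻¹'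
      univ.pi fun i => Icc (c i) (c i + r) := by
  ext x
  exact ⟨fun h i _ => h i, fun h i => h i (mem_univ i)⟩

lemma measurableSet_euCube (c : EuclideanSpace ℝ (Fin n)) (r : ℝ) :
    MeasurableSet (euCube c r) := by
  rw [euCube_eq_preimage_pi]
  exact (MeasurableEquiv.toLp 2 (Fin n → ℝ)).symm.measurable
    (MeasurableSet.univ_pi fun _ => measurableSet_Icc)

lemma volume_euCube (c : EuclideanSpace ℝ (Fin n)) (r : ℝ) :
    volume (euCube c r) = ENNReal.ofReal r ^ n := by
  rw [euCube_eq_preimage_pi,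
    (EuclideanSpace.volume_preserving_symm_measurableEquiv_toLp (Fin n)).measure_preimage
      (MeasurableSet.univ_pi fun _ => measurableSet_Icc).nullMeasurableSet,
    volume_pi_pi]
  simp [Real.volume_Icc]

lemma euCube_subset_closedBall (c : EuclideanSpace ℝ (Fin n)) {r : ℝ} (hr : 0 ≤ r) :
    euCube c r ⊆ Metric.closedBall c (√n * r) := by
  intro x hx
  have hcoord : ∀ i, dist (x i) (c i) ^ 2 ≤ r ^ 2 := fun i => by
    rw [Real.dist_eq, sq_abs]
    nlinarith [hx i]
  calc dist x c = √(∑ i, dist (x i) (c i) ^ 2) := EuclideanSpace.dist_eq x c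
    _ ≤ √(∑ _i : Fin n, r ^ 2) := Real.sqrt_le_sqrt (Finset.sum_le_sum fun i _ => hcoord i)
    _ = √n * r := by simp [Real.sqrt_sq hr]

lemma closedBall_subset_euCube (x : EuclideanSpace ℝ (Fin n)) {R s : ℝ} (hRs : R ≤ s) :
    Metric.closedBall x R ⊆ euCube (WithLp.toLp 2 fun i => x i - s) (2 * s) := by
  intro y hy i
  have hi : |y i - x i| ≤ s :=
    (Real.dist_eq _ _ ▸ PiLp.dist_apply_le y x i).trans (Metric.mem_closedBall.1 hy |>.trans hRs)
  rw [abs_le] at hi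
  constructor <;> linarith

/-- `ρ = 2K(√n + 1)` rather than `2K√n` keeps the new side length positive when `n = 0`. -/
lemma exists_preimage_euCube_subset_euCube
    {Φ Ψ : EuclideanSpace ℝ (Fin n) → EuclideanSpace ℝ (Fin n)} {K : ℝ≥0}
    (hΨ : LipschitzWith K Ψ) (hΨΦ : Function.LeftInverse Ψ Φ)
    (c : EuclideanSpace ℝ (Fin n)) {r : ℝ} (hr : 0 ≤ r) :
    ∃ c', Φ ⁻¹' euCube c r ⊆ euCube c' (2 * K * (√n + 1) * r) := by
  refine ⟨WithLp.toLp 2 fun i => Ψ c i - K * (√n + 1) * r, fun x hx => ?_⟩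
  have hball : x ∈ Metric.closedBall (Ψ c) (K * (√n * r)) := by
    rw [← hΨΦ x]
    exact hΨ.mapsTo_closedBall c _ (euCube_subset_closedBall c hr hx)
  have hRs : (K : ℝ) * (√n * r) ≤ K * (√n + 1) * r := by
    rw [← mul_assoc, mul_add_one, add_mul]
    linarith [mul_nonneg K.coe_nonneg hr]
  simpa only [mul_assoc] using closedBall_subset_euCube (Ψ c) hRs hball

end Cubes

section A2

variable {n : ℕ} {Φ : EuclideanSpace ℝ (Fin n) → EuclideanSpace ℝ (Fin n)}

lemma map_euCube_div_volume_le (hΦ : Measurable Φ) (μ : Measure (EuclideanSpace ℝ (Fin n)))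
    {c c' : EuclideanSpace ℝ (Fin n)} {r ρ : ℝ} (hρ : 0 < ρ)
    (hsub : Φ ⁻¹' euCube c r ⊆ euCube c' (ρ * r)) :
    μ.map Φ (euCube c r) / volume (euCube c r) ≤
      ENNReal.ofReal ρ ^ n * (μ (euCube c' (ρ * r)) / volume (euCube c' (ρ * r))) := by
  have hρn : ENNReal.ofReal ρ ^ n ≠ 0 := pow_ne_zero _ (ENNReal.ofReal_pos.2 hρ).ne'
  rw [volume_euCube, volume_euCube, ENNReal.ofReal_mul hρ.le, mul_pow, ← mul_div_assoc,
    ENNReal.mul_div_mul_left _ _ hρn (pow_ne_top ofReal_ne_top),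
    Measure.map_apply hΦ (measurableSet_euCube c r)]
  gcongr

lemma A2char_map_le (hΦ : Measurable Φ) {ρ : ℝ} (hρ : 0 < ρ)
    (hcube : ∀ c r, 0 < r → ∃ c', Φ ⁻¹' euCube c r ⊆ euCube c' (ρ * r))
    (σ ω : Measure (EuclideanSpace ℝ (Fin n))) :
    A2char (σ.map Φ) (ω.map Φ) ≤ ENNReal.ofReal ρ ^ (2 * n) * A2char σ ω := by
  refine iSup₂_le fun c r => iSup_le fun hr => ?_
  obtain ⟨c', hsub⟩ := hcube c r hr
  calc _ ≤ (ENNReal.ofReal ρ ^ n * (σ (euCube c' (ρ * r)) / volume (euCube c' (ρ * r)))) *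
          (ENNReal.ofReal ρ ^ n * (ω (euCube c' (ρ * r)) / volume (euCube c' (ρ * r)))) :=
        mul_le_mul' (map_euCube_div_volume_le hΦ σ hρ hsub)
          (map_euCube_div_volume_le hΦ ω hρ hsub)
    _ = ENNReal.ofReal ρ ^ (2 * n) * ((σ (euCube c' (ρ * r)) / volume (euCube c' (ρ * r))) *
          (ω (euCube c' (ρ * r)) / volume (euCube c' (ρ * r)))) := by
        rw [two_mul, pow_add]
        ring
    _ ≤ ENNReal.ofReal ρ ^ (2 * n) * A2char σ ω := by
        gcongr
        exact le_iSup₂_of_le c' (ρ * r) (le_iSup_of_le (mul_pos hρ hr) le_rfl)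

end A2

/-- If `Φ : ℝⁿ → ℝⁿ` is biLipschitz (with `K` a biLipschitz bound for `Φ` and its inverse `Ψ`),
then `A₂(Φ_*σ, Φ_*ω) ≤ C · K^{4n} · A₂(σ,ω)` for all locally finite positive Borel measures
`σ, ω`, where `C` depends only on `n`. -/
theorem stmt11 (n : ℕ) :
    ∃ C : ℝ≥0∞, 0 < C ∧ C < ⊤ ∧
      ∀ (Φ Ψ : EuclideanSpace ℝ (Fin n) → EuclideanSpace ℝ (Fin n)) (K : ℝ≥0),
        1 ≤ K →
        LipschitzWith K Φ → LipschitzWith K Ψ →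
        Function.LeftInverse Ψ Φ → Function.RightInverse Ψ Φ →
        ∀ (σ ω : Measure (EuclideanSpace ℝ (Fin n))),
          IsLocallyFiniteMeasure σ → IsLocallyFiniteMeasure ω →
          A2char (Measure.map Φ σ) (Measure.map Φ ω) ≤ C * (K : ℝ≥0∞) ^ (4 * n) * A2char σ ω := by
  refine ⟨ENNReal.ofReal (2 * (√n + 1)) ^ (2 * n),
    ENNReal.pow_pos (ofReal_pos.2 (by positivity)) _,
    pow_lt_top ofReal_lt_top, fun Φ Ψ K hK hΦ hΨ hΨΦ _ σ ω _ _ => ?_⟩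
  have hρ : ENNReal.ofReal (2 * K * (√n + 1)) = ENNReal.ofReal (2 * (√n + 1)) * K := by
    rw [← ofReal_coe_nnreal, ← ofReal_mul (by positivity), mul_right_comm]
  calc _ ≤ ENNReal.ofReal (2 * K * (√n + 1)) ^ (2 * n) * A2char σ ω :=
        A2char_map_le hΦ.continuous.measurable (by positivity)
          (fun c r hr => exists_preimage_euCube_subset_euCube hΨ hΨΦ c hr.le) σ ω
    _ ≤ _ := by
        rw [hρ, mul_pow]
        gcongr
        · exact_mod_cast hK
        · omega
end

section
/- Let Φ : ℝⁿ → ℝⁿ be Borel measurable and shape-preserving with constant K (i.e., for every cube Q there exist cubes Q_small ⊂ Φ⁻¹(Q) ⊂ Q_big with ℓ(Q_big)/ℓ(Q_small) ≤ K). Then the following are equivalent: (1) there exists C₁ > 0 such that |Φ⁻¹(Q)| ≤ C₁|Q| for every cube Q; (2) there exists C > 0 such that A₂(Φ_*σ, Φ_*ω) ≤ C·A₂(σ,ω) for all pairs of locally finite positive Borel measures σ, ω. Moreover, in the forward direction the constant is C = C₁²K^{2n}. -/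
/-!
If `Q' ⊇ Φ⁻¹(Q)` is the outer cube given by shape preservation, then
`|Q'| ≤ K^n |Q_small| ≤ K^n |Φ⁻¹(Q)| ≤ K^n C₁ |Q|`, so each average `Φ_*σ(Q)/|Q| ≤ σ(Q')/|Q|`
is at most `K^n C₁` times the average `σ(Q')/|Q'|`; multiplying the two averages gives the bound.
Conversely, testing the `A₂` bound on `σ = ω = |·|`, for which `A₂ = 1`, gives
`(|Φ⁻¹(Q)|/|Q|)² ≤ C`.
-/

open MeasureTheory Set ENNReal NNReal

lemma ENNReal.div_le_mul_div {a b b' M : ℝ≥0∞} (hb'0 : b' ≠ 0) (hb'top : b' ≠ ⊤)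
    (h : b' ≤ M * b) : a / b ≤ M * (a / b') :=
  ENNReal.div_le_of_le_mul <|
    calc a = a / b' * b' := (ENNReal.div_mul_cancel hb'0 hb'top).symm
      _ ≤ a / b' * (M * b) := by gcongr
      _ = M * (a / b') * b := by ring

lemma ENNReal.le_max_one_of_sq_le {a b : ℝ≥0∞} (h : a ^ 2 ≤ b) : a ≤ max 1 b := by
  rcases le_total a 1 with ha | ha
  · exact ha.trans (le_max_left _ _)
  · exact (le_self_pow₀ ha two_ne_zero).trans (h.trans (le_max_right _ _))

section Cubes

variable {n : ℕ}

lemma volume_euCube_ne_zero (c : EuclideanSpace ℝ (Fin n)) {r : ℝ} (hr : 0 < r) :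
    volume (euCube c r) ≠ 0 := by
  rw [volume_euCube]
  exact pow_ne_zero _ (ENNReal.ofReal_pos.mpr hr).ne'

lemma volume_euCube_ne_top (c : EuclideanSpace ℝ (Fin n)) (r : ℝ) :
    volume (euCube c r) ≠ ⊤ := by
  rw [volume_euCube]
  exact pow_ne_top ofReal_ne_top

lemma volume_euCube_le_of_le_mul {c₁ c₂ : EuclideanSpace ℝ (Fin n)} {r₁ r₂ : ℝ} {K : ℝ≥0}
    (h : r₂ ≤ K * r₁) : volume (euCube c₂ r₂) ≤ (K : ℝ≥0∞) ^ n * volume (euCube c₁ r₁) := by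
  rw [volume_euCube, volume_euCube, ← mul_pow, ← ENNReal.ofReal_coe_nnreal,
    ← ENNReal.ofReal_mul K.coe_nonneg]
  gcongr

/-- Needed because `A2char` only ranges over `r > 0`: in dimension `0` every `euCube` is the
whole (one-point) space and has volume `1`, whatever the sign of `r`. -/
lemma exists_pos_euCube_eq {c : EuclideanSpace ℝ (Fin n)} {r : ℝ}
    (h : volume (euCube c r) ≠ 0) : ∃ r' > 0, euCube c r' = euCube c r := by
  rcases lt_or_ge 0 r with hr | hr
  · exact ⟨r, hr, rfl⟩
  · obtain rfl : n = 0 := by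
      by_contra hn
      rw [volume_euCube, ENNReal.ofReal_of_nonpos hr, zero_pow hn] at h
      exact h rfl
    exact ⟨1, one_pos, by ext x; simp [euCube]⟩

end Cubes

section A2

variable {n : ℕ}

lemma le_A2char {σ ω : Measure (EuclideanSpace ℝ (Fin n))} {c : EuclideanSpace ℝ (Fin n)}
    {r : ℝ} (h : volume (euCube c r) ≠ 0) :
    σ (euCube c r) / volume (euCube c r) * (ω (euCube c r) / volume (euCube c r)) ≤
      A2char σ ω := by
  obtain ⟨r', hr', hcube⟩ := exists_pos_euCube_eq h
  rw [← hcube]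
  exact le_iSup_of_le c (le_iSup_of_le r' (le_iSup_of_le hr' le_rfl))

lemma A2char_volume_le_one :
    A2char (volume : Measure (EuclideanSpace ℝ (Fin n))) volume ≤ 1 :=
  iSup_le fun c => iSup_le fun r => iSup_le fun hr => by
    rw [ENNReal.div_self (volume_euCube_ne_zero c hr) (volume_euCube_ne_top c r), one_mul]

def ShapePreserving (Φ : EuclideanSpace ℝ (Fin n) → EuclideanSpace ℝ (Fin n)) (K : ℝ≥0) :
    Prop :=
  ∀ (c : EuclideanSpace ℝ (Fin n)) (r : ℝ), 0 < r →
    ∃ (c₁ : EuclideanSpace ℝ (Fin n)) (r₁ : ℝ) (c₂ : EuclideanSpace ℝ (Fin n)) (r₂ : ℝ),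
      0 < r₁ ∧ euCube c₁ r₁ ⊆ Φ ⁻¹' (euCube c r) ∧ Φ ⁻¹' (euCube c r) ⊆ euCube c₂ r₂ ∧
      r₂ ≤ (K : ℝ) * r₁

theorem A2char_map_le_of_volume_preimage_le
    {Φ : EuclideanSpace ℝ (Fin n) → EuclideanSpace ℝ (Fin n)} (hΦ : Measurable Φ) {K : ℝ≥0}
    (hshape : ShapePreserving Φ K) {C₁ : ℝ≥0∞}
    (hvol : ∀ (c : EuclideanSpace ℝ (Fin n)) (r : ℝ), 0 < r →
      volume (Φ ⁻¹' euCube c r) ≤ C₁ * volume (euCube c r))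
    (σ ω : Measure (EuclideanSpace ℝ (Fin n))) :
    A2char (Measure.map Φ σ) (Measure.map Φ ω) ≤
      C₁ ^ 2 * (K : ℝ≥0∞) ^ (2 * n) * A2char σ ω := by
  refine iSup_le fun c => iSup_le fun r => iSup_le fun hr => ?_
  obtain ⟨c₁, r₁, c₂, r₂, hr₁, hin, hout, hKr⟩ := hshape c r hr
  set Q := euCube c r
  set Q' := euCube c₂ r₂
  have hQ'0 : volume Q' ≠ 0 :=
    ((measure_mono (hin.trans hout)).trans_lt' (volume_euCube_ne_zero c₁ hr₁).bot_lt).ne'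
  have hQ' : volume Q' ≤ (K : ℝ≥0∞) ^ n * C₁ * volume Q :=
    calc volume Q' ≤ (K : ℝ≥0∞) ^ n * volume (euCube c₁ r₁) :=
          volume_euCube_le_of_le_mul hKr
      _ ≤ (K : ℝ≥0∞) ^ n * (C₁ * volume Q) := by
          gcongr; exact (measure_mono hin).trans (hvol c r hr)
      _ = (K : ℝ≥0∞) ^ n * C₁ * volume Q := (mul_assoc _ _ _).symm
  have havg (μ : Measure (EuclideanSpace ℝ (Fin n))) :
      Measure.map Φ μ Q / volume Q ≤ (K : ℝ≥0∞) ^ n * C₁ * (μ Q' / volume Q') := by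
    rw [Measure.map_apply hΦ (measurableSet_euCube c r)]
    exact (ENNReal.div_le_div_right (measure_mono hout) _).trans
      (ENNReal.div_le_mul_div hQ'0 (volume_euCube_ne_top c₂ r₂) hQ')
  calc Measure.map Φ σ Q / volume Q * (Measure.map Φ ω Q / volume Q)
      ≤ (K ^ n * C₁ * (σ Q' / volume Q')) * (K ^ n * C₁ * (ω Q' / volume Q')) :=
        mul_le_mul' (havg σ) (havg ω)
    _ = ((K : ℝ≥0∞) ^ n * C₁) ^ 2 * (σ Q' / volume Q' * (ω Q' / volume Q')) := by ring
    _ ≤ ((K : ℝ≥0∞) ^ n * C₁) ^ 2 * A2char σ ω := by gcongr; exact le_A2char hQ'0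
    _ = C₁ ^ 2 * (K : ℝ≥0∞) ^ (2 * n) * A2char σ ω := by ring

theorem volume_preimage_le_of_A2char_map_volume_le
    {Φ : EuclideanSpace ℝ (Fin n) → EuclideanSpace ℝ (Fin n)} (hΦ : Measurable Φ) {C : ℝ≥0∞}
    (hA2 : A2char (Measure.map Φ volume) (Measure.map Φ volume) ≤ C)
    (c : EuclideanSpace ℝ (Fin n)) {r : ℝ} (hr : 0 < r) :
    volume (Φ ⁻¹' euCube c r) ≤ max 1 C * volume (euCube c r) := by
  set Q := euCube c r
  have hsq : (volume (Φ ⁻¹' Q) / volume Q) ^ 2 ≤ C :=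
    calc (volume (Φ ⁻¹' Q) / volume Q) ^ 2
        = Measure.map Φ volume Q / volume Q * (Measure.map Φ volume Q / volume Q) := by
          rw [Measure.map_apply hΦ (measurableSet_euCube c r), sq]
      _ ≤ C := (le_A2char (volume_euCube_ne_zero c hr)).trans hA2
  exact (ENNReal.div_le_iff (volume_euCube_ne_zero c hr) (volume_euCube_ne_top c r)).mp
    (ENNReal.le_max_one_of_sq_le hsq)

end A2

theorem stmt12_general (n : ℕ) (Φ : EuclideanSpace ℝ (Fin n) → EuclideanSpace ℝ (Fin n))
    (hΦ : Measurable Φ) (K : ℝ≥0)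
    (hshape : ∀ (c : EuclideanSpace ℝ (Fin n)) (r : ℝ), 0 < r →
      ∃ (c₁ : EuclideanSpace ℝ (Fin n)) (r₁ : ℝ) (c₂ : EuclideanSpace ℝ (Fin n)) (r₂ : ℝ),
        0 < r₁ ∧ euCube c₁ r₁ ⊆ Φ ⁻¹' (euCube c r) ∧ Φ ⁻¹' (euCube c r) ⊆ euCube c₂ r₂ ∧
        r₂ ≤ (K : ℝ) * r₁) :
    (∀ C₁ : ℝ≥0∞, 0 < C₁ →
      (∀ (c : EuclideanSpace ℝ (Fin n)) (r : ℝ), 0 < r →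
        volume (Φ ⁻¹' (euCube c r)) ≤ C₁ * volume (euCube c r)) →
      ∀ (σ ω : Measure (EuclideanSpace ℝ (Fin n))),
        IsLocallyFiniteMeasure σ → IsLocallyFiniteMeasure ω →
        A2char (Measure.map Φ σ) (Measure.map Φ ω) ≤
          C₁ ^ 2 * (K : ℝ≥0∞) ^ (2 * n) * A2char σ ω) ∧
    ((∃ C : ℝ≥0∞, 0 < C ∧ C < ⊤ ∧
        ∀ (σ ω : Measure (EuclideanSpace ℝ (Fin n))),
          IsLocallyFiniteMeasure σ → IsLocallyFiniteMeasure ω →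
          A2char (Measure.map Φ σ) (Measure.map Φ ω) ≤ C * A2char σ ω) →
      ∃ C₁ : ℝ≥0∞, 0 < C₁ ∧ C₁ < ⊤ ∧
        ∀ (c : EuclideanSpace ℝ (Fin n)) (r : ℝ), 0 < r →
          volume (Φ ⁻¹' (euCube c r)) ≤ C₁ * volume (euCube c r)) := by
  refine ⟨fun C₁ _ hvol σ ω _ _ => A2char_map_le_of_volume_preimage_le hΦ hshape hvol σ ω, ?_⟩
  rintro ⟨C, -, hCtop, hC⟩
  have hA2 : A2char (Measure.map Φ volume) (Measure.map Φ volume) ≤ C :=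
    (hC _ _ inferInstance inferInstance).trans (mul_le_of_le_one_right' A2char_volume_le_one)
  exact ⟨max 1 C, zero_lt_one.trans_le (le_max_left _ _), max_lt one_lt_top hCtop,
    fun c r hr => volume_preimage_le_of_A2char_map_volume_le hΦ hA2 c hr⟩

/-- Let `Φ : ℝⁿ → ℝⁿ` be Borel measurable and shape-preserving with constant `K`.  Then:
(a) if `|Φ⁻¹(Q)| ≤ C₁|Q|` for every cube `Q`, then `A₂(Φ_*σ, Φ_*ω) ≤ C₁²K^{2n}·A₂(σ,ω)`
for all pairs of locally finite positive Borel measures; and (b) conversely, if such an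
`A₂`-stability bound holds with some constant, then there is `C₁ > 0` with
`|Φ⁻¹(Q)| ≤ C₁|Q|` for every cube `Q`. -/
theorem stmt12 (n : ℕ) (Φ : EuclideanSpace ℝ (Fin n) → EuclideanSpace ℝ (Fin n))
    (hΦ : Measurable Φ) (K : ℝ≥0) (hK : 1 ≤ K)
    (hshape : ∀ (c : EuclideanSpace ℝ (Fin n)) (r : ℝ), 0 < r →
      ∃ (c₁ : EuclideanSpace ℝ (Fin n)) (r₁ : ℝ) (c₂ : EuclideanSpace ℝ (Fin n)) (r₂ : ℝ),
        0 < r₁ ∧ euCube c₁ r₁ ⊆ Φ ⁻¹' (euCube c r) ∧ Φ ⁻¹' (euCube c r) ⊆ euCube c₂ r₂ ∧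
        r₂ ≤ (K : ℝ) * r₁) :
    (∀ C₁ : ℝ≥0∞, 0 < C₁ →
      (∀ (c : EuclideanSpace ℝ (Fin n)) (r : ℝ), 0 < r →
        volume (Φ ⁻¹' (euCube c r)) ≤ C₁ * volume (euCube c r)) →
      ∀ (σ ω : Measure (EuclideanSpace ℝ (Fin n))),
        IsLocallyFiniteMeasure σ → IsLocallyFiniteMeasure ω →
        A2char (Measure.map Φ σ) (Measure.map Φ ω) ≤
          C₁ ^ 2 * (K : ℝ≥0∞) ^ (2 * n) * A2char σ ω) ∧
    ((∃ C : ℝ≥0∞, 0 < C ∧ C < ⊤ ∧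
        ∀ (σ ω : Measure (EuclideanSpace ℝ (Fin n))),
          IsLocallyFiniteMeasure σ → IsLocallyFiniteMeasure ω →
          A2char (Measure.map Φ σ) (Measure.map Φ ω) ≤ C * A2char σ ω) →
      ∃ C₁ : ℝ≥0∞, 0 < C₁ ∧ C₁ < ⊤ ∧
        ∀ (c : EuclideanSpace ℝ (Fin n)) (r : ℝ), 0 < r →
          volume (Φ ⁻¹' (euCube c r)) ≤ C₁ * volume (euCube c r)) :=
  stmt12_general n Φ hΦ K hshape
end
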